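/- arXiv:1003.5252 — 3 statements merged into one kernel-verified Lean document; each statement's English description precedes it below -/
import Mathlib

section
/- Let d be an odd positive integer, χ : ℤ → ℂ be d-periodic, and ξ ∈ ℂ with ξ^{d w_i w_j} + 1 ≠ 0 for all pairs i,j, where w₁, w₂, w₃ are positive integers. Then for all n ≥ 0 and y₁,y₂,y₃ ∈ ℂ: ∑_{k+l+m=n} (n!/(k!l!m!)) E_{k,χ,ξ^{w₂w₃}}(w₁y₁) E_{l,χ,ξ^{w₁w₃}}(w₂y₂) E_{m,χ,ξ^{w₁w₂}}(w₃y₃) w₁^{l+m} w₂^{k+m} w₃^{k+l} is invariant under every permutation of the index set {1,2,3} (simultaneously permuting the w's, the twisting exponents, and the order of the three Euler-polynomial factors accordingly); in particular the six expressions obtained by the six permutations of (w₁,w₂,w₃) are all equal. -/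
/-! Under `t ↦ w_j w_k t`, the generating function of `E_{·,χ,ξ^{w_j w_k}}(w_i y_i)` becomes
`e^{w₁w₂w₃ y_i t}` times a kernel `K(w_j w_k)` depending only on the product of the two other
weights.
Hence `S / n!` is the `n`-th coefficient of `e^{w₁w₂w₃(y₁+y₂+y₃)t} ∏_i K(∏_{j ≠ i} w_j)`,
which is visibly invariant under permuting the weights. -/

open Finset PowerSeries

/-- Generating function of the generalized twisted Euler polynomials:
`2 e^{xt} (ξ^d e^{dt}+1)⁻¹ ∑_{a=0}^{d-1} (-1)^a χ(a) ξ^a e^{at}` in `ℂ[[t]]`. -/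
noncomputable def Egf (d : ℕ) (χ : ℤ → ℂ) (ξ x : ℂ) : PowerSeries ℂ :=
  2 * rescale x (exp ℂ) * (ξ ^ d • rescale (d : ℂ) (exp ℂ) + 1)⁻¹ *
    ∑ a ∈ Finset.range d, ((-1 : ℂ) ^ a * χ a * ξ ^ a) • rescale (a : ℂ) (exp ℂ)

/-- The generalized twisted Euler polynomial `E_{n,χ,ξ}(x)`. -/
noncomputable def E (d : ℕ) (χ : ℤ → ℂ) (ξ x : ℂ) (n : ℕ) : ℂ :=
  (n.factorial : ℂ) * PowerSeries.coeff n (Egf d χ ξ x)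

/-- The alternating generalized twisted power sum `T_k(m; χ, ξ)`. -/
noncomputable def T (m : ℕ) (χ : ℤ → ℂ) (ξ : ℂ) (k : ℕ) : ℂ :=
  ∑ a ∈ Finset.range (m + 1), (-1 : ℂ) ^ a * χ a * ξ ^ a * (a : ℂ) ^ k


/-- The triple sum of Theorem 1, as a function of `(w₁, w₂, w₃)`. -/
noncomputable def S (d : ℕ) (χ : ℤ → ℂ) (ξ : ℂ) (n : ℕ) (y₁ y₂ y₃ : ℂ)
    (u v w : ℕ) : ℂ :=
  ∑ k ∈ Finset.range (n + 1), ∑ l ∈ Finset.range (n + 1 - k),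
    (n.factorial : ℂ) / ((k.factorial : ℂ) * (l.factorial : ℂ) * ((n - k - l).factorial : ℂ)) *
      E d χ (ξ ^ (v * w)) ((u : ℂ) * y₁) k *
      E d χ (ξ ^ (u * w)) ((v : ℂ) * y₂) l *
      E d χ (ξ ^ (u * v)) ((w : ℂ) * y₃) (n - k - l) *
      (u : ℂ) ^ (l + (n - k - l)) * (v : ℂ) ^ (k + (n - k - l)) * (w : ℂ) ^ (k + l)

namespace PowerSeries

lemma coeff_mul_mul_eq_sum {R : Type*} [CommSemiring R] (f g h : R⟦X⟧) (n : ℕ) :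
    coeff n (f * g * h) = ∑ k ∈ range (n + 1), ∑ l ∈ range (n + 1 - k),
      coeff k f * coeff l g * coeff (n - k - l) h := by
  rw [mul_assoc, coeff_mul, Nat.sum_antidiagonal_eq_sum_range_succ_mk]
  refine sum_congr rfl fun k hk => ?_
  have hk : k ≤ n := Nat.lt_succ_iff.mp (mem_range.mp hk)
  rw [coeff_mul, Nat.sum_antidiagonal_eq_sum_range_succ_mk, mul_sum,
    show n + 1 - k = n - k + 1 by omega]
  exact sum_congr rfl fun l _ => (mul_assoc _ _ _).symm

end PowerSeries

lemma Egf_eq_rescale_exp_mul (d : ℕ) (χ : ℤ → ℂ) (η x : ℂ) :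
    Egf d χ η x = rescale x (exp ℂ) * Egf d χ η 0 := by
  simp only [Egf, rescale_zero_apply, constantCoeff_exp, map_one, mul_one]
  ring

lemma rescale_Egf (d : ℕ) (χ : ℤ → ℂ) (η x c : ℂ) :
    rescale c (Egf d χ η x) = rescale (x * c) (exp ℂ) * rescale c (Egf d χ η 0) := by
  rw [Egf_eq_rescale_exp_mul, map_mul, rescale_rescale]

lemma coeff_rescale_Egf (d : ℕ) (χ : ℤ → ℂ) (η x c : ℂ) (k : ℕ) :
    coeff k (rescale c (Egf d χ η x)) = c ^ k * E d χ η x k / k.factorial := by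
  rw [coeff_rescale, E, mul_left_comm,
    mul_div_cancel_left₀ _ (Nat.cast_ne_zero.mpr k.factorial_ne_zero)]

noncomputable def scaledEgf (d : ℕ) (χ : ℤ → ℂ) (ξ : ℂ) (m : ℕ) : PowerSeries ℂ :=
  rescale (m : ℂ) (Egf d χ (ξ ^ m) 0)

noncomputable def symmetricEgfProduct {ι : Type*} [Fintype ι] [DecidableEq ι]
    (d : ℕ) (χ : ℤ → ℂ) (ξ y : ℂ) (w : ι → ℕ) : PowerSeries ℂ :=
  rescale ((∏ i, w i : ℕ) * y) (exp ℂ) * ∏ i, scaledEgf d χ ξ (∏ j ∈ univ.erase i, w j)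

lemma symmetricEgfProduct_comp_perm {ι : Type*} [Fintype ι] [DecidableEq ι]
    (d : ℕ) (χ : ℤ → ℂ) (ξ y : ℂ) (w : ι → ℕ) (σ : Equiv.Perm ι) :
    symmetricEgfProduct d χ ξ y (w ∘ σ) = symmetricEgfProduct d χ ξ y w := by
  have hprod : ∀ i, ∏ j ∈ univ.erase i, w (σ j) = ∏ j ∈ univ.erase (σ i), w j := fun i =>
    prod_equiv σ (by simp [σ.injective.eq_iff]) (fun _ _ => rfl)
  simp only [symmetricEgfProduct, Function.comp_apply, hprod, Equiv.prod_comp σ w,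
    Equiv.prod_comp σ (fun i => scaledEgf d χ ξ (∏ j ∈ univ.erase i, w j))]

lemma symmetricEgfProduct_fin_three (d : ℕ) (χ : ℤ → ℂ) (ξ : ℂ) (y₁ y₂ y₃ : ℂ) (u v w : ℕ) :
    symmetricEgfProduct d χ ξ (y₁ + y₂ + y₃) ![u, v, w] =
      rescale ((v * w : ℕ) : ℂ) (Egf d χ (ξ ^ (v * w)) (u * y₁)) *
      rescale ((u * w : ℕ) : ℂ) (Egf d χ (ξ ^ (u * w)) (v * y₂)) *
      rescale ((u * v : ℕ) : ℂ) (Egf d χ (ξ ^ (u * v)) (w * y₃)) := by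
  have erase0 : (univ.erase 0 : Finset (Fin 3)) = {1, 2} := by decide
  have erase1 : (univ.erase 1 : Finset (Fin 3)) = {0, 2} := by decide
  have erase2 : (univ.erase 2 : Finset (Fin 3)) = {0, 1} := by decide
  rw [rescale_Egf _ _ _ (u * y₁), rescale_Egf _ _ _ (v * y₂), rescale_Egf _ _ _ (w * y₃)]
  simp only [symmetricEgfProduct, scaledEgf, Fin.prod_univ_three, erase0, erase1, erase2,
    prod_pair (show (1 : Fin 3) ≠ 2 by decide), prod_pair (show (0 : Fin 3) ≠ 2 by decide),
    prod_pair (show (0 : Fin 3) ≠ 1 by decide), Matrix.cons_val_zero, Matrix.cons_val_one,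
    Matrix.cons_val_two, Matrix.head_cons, Matrix.tail_cons]
  rw [show ((u * v * w : ℕ) : ℂ) * (y₁ + y₂ + y₃) =
      u * y₁ * (v * w : ℕ) + (v * y₂ * (u * w : ℕ) + w * y₃ * (u * v : ℕ)) by push_cast; ring,
    ← exp_mul_exp_eq_exp_add, ← exp_mul_exp_eq_exp_add]
  ring

lemma S_eq_coeff_symmetricEgfProduct (d : ℕ) (χ : ℤ → ℂ) (ξ : ℂ) (n : ℕ) (y₁ y₂ y₃ : ℂ)
    (u v w : ℕ) :
    S d χ ξ n y₁ y₂ y₃ u v w =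
      n.factorial * coeff n (symmetricEgfProduct d χ ξ (y₁ + y₂ + y₃) ![u, v, w]) := by
  rw [symmetricEgfProduct_fin_three, coeff_mul_mul_eq_sum, mul_sum, S]
  refine sum_congr rfl fun k _ => ?_
  rw [mul_sum]
  refine sum_congr rfl fun l _ => ?_
  simp only [coeff_rescale_Egf]
  field_simp
  push_cast
  ring

theorem theorem1_general (d : ℕ)
    (χ : ℤ → ℂ) (ξ : ℂ)
    (w : Fin 3 → ℕ)
    (n : ℕ) (y₁ y₂ y₃ : ℂ) (σ : Equiv.Perm (Fin 3)) :
    S d χ ξ n y₁ y₂ y₃ (w (σ 0)) (w (σ 1)) (w (σ 2)) =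
      S d χ ξ n y₁ y₂ y₃ (w 0) (w 1) (w 2) := by
  have hσ : ![w (σ 0), w (σ 1), w (σ 2)] = w ∘ σ := by ext i; fin_cases i <;> rfl
  have hid : ![w 0, w 1, w 2] = w := by ext i; fin_cases i <;> rfl
  rw [S_eq_coeff_symmetricEgfProduct, S_eq_coeff_symmetricEgfProduct, hσ, hid,
    symmetricEgfProduct_comp_perm]

/-- Theorem 1: the expression is invariant under all six permutations of `(w₁,w₂,w₃)`. -/
theorem theorem1 (d : ℕ) (hd : Odd d) (hd0 : 0 < d)
    (χ : ℤ → ℂ) (hχ : Function.Periodic χ (d : ℤ)) (ξ : ℂ)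
    (w : Fin 3 → ℕ) (hw : ∀ i, 0 < w i)
    (hξ : ∀ i j, i ≠ j → ξ ^ (d * w i * w j) + 1 ≠ 0)
    (n : ℕ) (y₁ y₂ y₃ : ℂ) (σ : Equiv.Perm (Fin 3)) :
    S d χ ξ n y₁ y₂ y₃ (w (σ 0)) (w (σ 1)) (w (σ 2)) =
      S d χ ξ n y₁ y₂ y₃ (w 0) (w 1) (w 2) :=
  theorem1_general d χ ξ w n y₁ y₂ y₃ σ
end

section
/- Let d, w₁, w₂, w₃ be odd positive integers, χ : ℤ → ℂ be d-periodic, ξ ∈ ℂ with appropriate nonvanishing conditions. Then for all n ≥ 0 and y₁ ∈ ℂ: (w₁w₂)ⁿ ∑_{a=0}^{w₁d−1} ∑_{b=0}^{w₂d−1} (−1)^{a+b} χ(a)χ(b) ξ^{w₃(a w₂ + b w₁)} E_{n,χ,ξ^{w₁w₂}}(w₃y₁ + (w₃/w₁)a + (w₃/w₂)b) = (w₂w₃)ⁿ ∑_{a=0}^{w₂d−1} ∑_{b=0}^{w₃d−1} (−1)^{a+b} χ(a)χ(b) ξ^{w₁(a w₃ + b w₂)} E_{n,χ,ξ^{w₂w₃}}(w₁y₁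 + (w₁/w₂)a + (w₁/w₃)b) = (w₃w₁)ⁿ ∑_{a=0}^{w₃d−1} ∑_{b=0}^{w₁d−1} (−1)^{a+b} χ(a)χ(b) ξ^{w₂(a w₁ + b w₃)} E_{n,χ,ξ^{w₁w₃}}(w₂y₁ + (w₂/w₃)a + (w₂/w₁)b). -/
open Finset PowerSeries

/-!
Put `q = ξ eᵗ` and `S_m(Q) = ∑_{a < m d} (-1)ᵃ χ(a) Qᵃ` (`twistedGeomSum d χ m Q`), so that
`Egf d χ ξ x = 2 e^{xt} S₁(q) / (q^d + 1)`. After the substitution `t ↦ w₁w₂ t` the left-hand side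
is `n!` times the `n`-th coefficient of
`2 e^{w₁w₂w₃ y t} · S₁(q^{w₁w₂}) / (q^{d w₁w₂} + 1) · S_{w₁}(q^{w₂w₃}) · S_{w₂}(q^{w₃w₁})`.
Because `d` is odd and `χ` is `d`-periodic, `S_m(Q)` is `S₁(Q)` times a geometric sum in `-Q^d`,
and for odd `m` this gives `S_m(Q) (Q^d + 1) = S₁(Q) (Q^{md} + 1)`. Hence the series equals
`2 e^{w₁w₂w₃ y t} (q^{d w₁w₂w₃} + 1)² ∏_k S₁(q^k) / (q^{dk} + 1)` over `k ∈ {w₁w₂, w₂w₃, w₃w₁}`,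
which is symmetric in `w₁, w₂, w₃`.
-/

theorem Odd.geom_sum_neg_mul_add_one {R : Type*} [CommRing R] {m : ℕ} (hm : Odd m) (x : R) :
    (∑ j ∈ range m, (-x) ^ j) * (x + 1) = x ^ m + 1 := by
  have h := geom_sum_mul (-x) m
  rw [hm.neg_pow] at h
  linear_combination -h

section TwistedGeomSum

variable {K R : Type*} [CommRing K] [CommRing R] [Algebra K R]

noncomputable def twistedGeomSum (d : ℕ) (χ : ℤ → K) (m : ℕ) (q : R) : R :=
  ∑ a ∈ range (m * d), ((-1 : K) ^ a * χ a) • q ^ a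

variable {d : ℕ} {χ : ℤ → K}

theorem twistedGeomSum_eq_mul_geom_sum (hd : Odd d) (hχ : Function.Periodic χ d) (m : ℕ)
    (q : R) :
    twistedGeomSum d χ m q = twistedGeomSum d χ 1 q * ∑ j ∈ range m, (-q ^ d) ^ j := by
  induction m with
  | zero => simp [twistedGeomSum]
  | succ m ih =>
    rw [twistedGeomSum, add_mul, one_mul, sum_range_add, ← twistedGeomSum, ih, sum_range_succ,
      mul_add, twistedGeomSum, one_mul]
    congr 1
    rw [sum_mul]
    refine Finset.sum_congr rfl fun a _ => ?_
    have hχa : χ ((m * d + a : ℕ) : ℤ) = χ a := by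
      simpa [add_comm] using hχ.nat_mul m a
    have hsign : (-1 : K) ^ (m * d + a) = (-1) ^ a * (-1) ^ m := by
      rw [pow_add, pow_mul', hd.neg_one_pow, mul_comm]
    have hpow : (-q ^ d) ^ m = ((-1 : K) ^ m) • q ^ (m * d) := by
      rw [neg_pow, ← pow_mul, mul_comm d m, Algebra.smul_def, map_pow, map_neg, map_one]
    rw [hχa, hsign, hpow, smul_mul_smul_comm, pow_add q, mul_comm (q ^ (m * d)), mul_right_comm]

theorem twistedGeomSum_mul_pow_add_one (hd : Odd d) (hχ : Function.Periodic χ d) {m : ℕ}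
    (hm : Odd m) (q : R) :
    twistedGeomSum d χ m q * (q ^ d + 1) = twistedGeomSum d χ 1 q * ((q ^ m) ^ d + 1) := by
  rw [twistedGeomSum_eq_mul_geom_sum hd hχ, mul_assoc, hm.geom_sum_neg_mul_add_one,
    pow_right_comm]

end TwistedGeomSum

namespace PowerSeries

theorem rescale_inv {k : Type*} [Field k] (c : k) (f : k⟦X⟧) :
    rescale c f⁻¹ = (rescale c f)⁻¹ := by
  have hf : constantCoeff (rescale c f) = constantCoeff f := by
    rw [← coeff_zero_eq_constantCoeff_apply, coeff_rescale, pow_zero, one_mul,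
      coeff_zero_eq_constantCoeff_apply]
  -- Over a field `φ⁻¹ = 0` iff `constantCoeff φ = 0`, and `rescale` keeps that coefficient.
  by_cases h : constantCoeff f = 0
  · rw [inv_eq_zero.mpr h, inv_eq_zero.mpr (hf ▸ h), map_zero]
  · rw [eq_inv_iff_mul_eq_one (hf ▸ h), ← map_mul, PowerSeries.inv_mul_cancel _ h, map_one]

theorem smul_exp_pow {A : Type*} [CommRing A] [Algebra ℚ A] (ξ : A) (r : ℕ) :
    (ξ • exp A) ^ r = ξ ^ r • rescale (r : A) (exp A) := by
  rw [smul_pow, exp_pow_eq_rescale_exp]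

theorem rescale_smul {A : Type*} [CommRing A] (c a : A) (f : A⟦X⟧) :
    rescale c (a • f) = a • rescale c f := by
  rw [← coe_rescaleAlgHom, RingHom.coe_coe, map_smul]

end PowerSeries

theorem rescale_twistedGeomSum {K : Type*} [CommRing K] (d : ℕ) (χ : ℤ → K) (m : ℕ) (c : K)
    (q : K⟦X⟧) : rescale c (twistedGeomSum d χ m q) = twistedGeomSum d χ m (rescale c q) := by
  simp only [twistedGeomSum, map_sum, rescale_smul, map_pow]

theorem twistedGeomSum_eq_mul_inv {k : Type*} [Field k] {d : ℕ} {χ : ℤ → k} (hd : Odd d)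
    (hχ : Function.Periodic χ d) {m : ℕ} (hm : Odd m) {Q : k⟦X⟧}
    (hQ : constantCoeff Q ^ d + 1 ≠ 0) :
    twistedGeomSum d χ m Q = twistedGeomSum d χ 1 Q * (Q ^ d + 1)⁻¹ * ((Q ^ m) ^ d + 1) := by
  have hinv : (Q ^ d + 1) * (Q ^ d + 1)⁻¹ = 1 := PowerSeries.mul_inv_cancel _ (by simpa)
  linear_combination (Q ^ d + 1)⁻¹ * twistedGeomSum_mul_pow_add_one hd hχ hm Q -
    twistedGeomSum d χ m Q * hinv

section Egf

variable {d : ℕ} {χ : ℤ → ℂ} {ξ : ℂ}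

theorem Egf_eq (x : ℂ) :
    Egf d χ ξ x = 2 * rescale x (exp ℂ) * ((ξ • exp ℂ) ^ d + 1)⁻¹ *
      twistedGeomSum d χ 1 (ξ • exp ℂ) := by
  simp only [Egf, twistedGeomSum, one_mul, smul_exp_pow, smul_smul]

theorem rescale_Egf_pow (k : ℕ) (x : ℂ) :
    rescale (k : ℂ) (Egf d χ (ξ ^ k) x) = 2 * rescale (x * k) (exp ℂ) *
      (((ξ • exp ℂ) ^ k) ^ d + 1)⁻¹ * twistedGeomSum d χ 1 ((ξ • exp ℂ) ^ k) := by
  have hq : rescale (k : ℂ) (ξ ^ k • exp ℂ) = (ξ • exp ℂ) ^ k := by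
    rw [rescale_smul, smul_exp_pow]
  rw [Egf_eq, map_mul, map_mul, map_mul, map_ofNat, rescale_rescale, rescale_inv, map_add,
    map_pow, map_one, rescale_twistedGeomSum, hq]

theorem pow_mul_E_eq_coeff_rescale (ζ x c : ℂ) (n : ℕ) :
    c ^ n * E d χ ζ x n = n.factorial * coeff n (rescale c (Egf d χ ζ x)) := by
  rw [E, coeff_rescale]
  ring

theorem sum_sum_smul_rescale_Egf {u v : ℕ} (hu : u ≠ 0) (hv : v ≠ 0) (w : ℕ) (y : ℂ) :
    ∑ a ∈ range (u * d), ∑ b ∈ range (v * d),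
        ((-1 : ℂ) ^ (a + b) * χ a * χ b * ξ ^ (w * (a * v + b * u))) •
          rescale ((u * v : ℕ) : ℂ) (Egf d χ (ξ ^ (u * v)) (w * y + w / u * a + w / v * b)) =
      2 * rescale ((u * v * w : ℕ) * y) (exp ℂ) * (((ξ • exp ℂ) ^ (u * v)) ^ d + 1)⁻¹ *
        twistedGeomSum d χ 1 ((ξ • exp ℂ) ^ (u * v)) *
        twistedGeomSum d χ u ((ξ • exp ℂ) ^ (v * w)) *
        twistedGeomSum d χ v ((ξ • exp ℂ) ^ (w * u)) := by
  have hexp (a b : ℕ) : ξ ^ (w * (a * v + b * u)) •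
      rescale ((w * y + w / u * a + w / v * b) * (u * v : ℕ)) (exp ℂ) =
      rescale ((u * v * w : ℕ) * y) (exp ℂ) * ((ξ • exp ℂ) ^ (v * w)) ^ a *
        ((ξ • exp ℂ) ^ (w * u)) ^ b := by
    rw [← pow_mul, ← pow_mul, smul_exp_pow, smul_exp_pow]
    simp only [mul_smul_comm, smul_mul_assoc, smul_smul, exp_mul_exp_eq_exp_add, ← pow_add]
    have hu' : (u : ℂ) ≠ 0 := Nat.cast_ne_zero.mpr hu
    have hv' : (v : ℂ) ≠ 0 := Nat.cast_ne_zero.mpr hv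
    congr 3
    · ring
    · field_simp
      push_cast
      ring
  have hterm (a b : ℕ) : ((-1 : ℂ) ^ (a + b) * χ a * χ b * ξ ^ (w * (a * v + b * u))) •
        rescale ((u * v : ℕ) : ℂ) (Egf d χ (ξ ^ (u * v)) (w * y + w / u * a + w / v * b)) =
      (((-1 : ℂ) ^ a * χ a) • ((ξ • exp ℂ) ^ (v * w)) ^ a) *
        (((-1 : ℂ) ^ b * χ b) • ((ξ • exp ℂ) ^ (w * u)) ^ b) *
        (2 * rescale ((u * v * w : ℕ) * y) (exp ℂ) *
          (((ξ • exp ℂ) ^ (u * v)) ^ d + 1)⁻¹ *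
          twistedGeomSum d χ 1 ((ξ • exp ℂ) ^ (u * v))) := by
    have h := hexp a b
    rw [rescale_Egf_pow]
    generalize ξ • exp ℂ = q at h ⊢
    simp only [smul_eq_C_mul, pow_add, map_mul] at h ⊢
    linear_combination (C ((-1 : ℂ) ^ a) * C ((-1 : ℂ) ^ b) * C (χ a) * C (χ b) * 2 *
      ((q ^ (u * v)) ^ d + 1)⁻¹ * twistedGeomSum d χ 1 (q ^ (u * v))) * h
  simp only [hterm, ← sum_mul, ← sum_mul_sum]
  rw [← twistedGeomSum.eq_1, ← twistedGeomSum.eq_1]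
  ring

theorem pow_mul_sum_sum_E_eq (hd : Odd d) (hχ : Function.Periodic χ d) {u v w : ℕ}
    (hu : Odd u) (hv : Odd v) (hvw : ξ ^ (d * v * w) + 1 ≠ 0) (hwu : ξ ^ (d * w * u) + 1 ≠ 0)
    (n : ℕ) (y : ℂ) :
    ((u : ℂ) * v) ^ n * ∑ a ∈ range (u * d), ∑ b ∈ range (v * d),
        (-1 : ℂ) ^ (a + b) * χ a * χ b * ξ ^ (w * (a * v + b * u)) *
          E d χ (ξ ^ (u * v)) (w * y + w / u * a + w / v * b) n =
      n.factorial * coeff n (2 * rescale ((u * v * w : ℕ) * y) (exp ℂ) *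
        (((ξ • exp ℂ) ^ (u * v * w)) ^ d + 1) ^ 2 *
        (twistedGeomSum d χ 1 ((ξ • exp ℂ) ^ (u * v)) *
          (((ξ • exp ℂ) ^ (u * v)) ^ d + 1)⁻¹) *
        (twistedGeomSum d χ 1 ((ξ • exp ℂ) ^ (v * w)) *
          (((ξ • exp ℂ) ^ (v * w)) ^ d + 1)⁻¹) *
        (twistedGeomSum d χ 1 ((ξ • exp ℂ) ^ (w * u)) *
          (((ξ • exp ℂ) ^ (w * u)) ^ d + 1)⁻¹)) := by
  have hcc (k : ℕ) : constantCoeff ((ξ • exp ℂ) ^ k) ^ d = ξ ^ (d * k) := by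
    simp [← pow_mul, mul_comm]
  calc _ = n.factorial * coeff n (∑ a ∈ range (u * d), ∑ b ∈ range (v * d),
        ((-1 : ℂ) ^ (a + b) * χ a * χ b * ξ ^ (w * (a * v + b * u))) •
          rescale ((u * v : ℕ) : ℂ) (Egf d χ (ξ ^ (u * v)) (w * y + w / u * a + w / v * b))) := by
        simp only [mul_sum, map_sum, coeff_smul, smul_eq_mul, Nat.cast_mul]
        refine sum_congr rfl fun a _ => sum_congr rfl fun b _ => ?_
        rw [mul_left_comm, pow_mul_E_eq_coeff_rescale, mul_left_comm]
    _ = _ := by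
        rw [sum_sum_smul_rescale_Egf hu.pos.ne' hv.pos.ne',
          twistedGeomSum_eq_mul_inv hd hχ hu (by rwa [hcc, ← mul_assoc]),
          twistedGeomSum_eq_mul_inv hd hχ hv (by rwa [hcc, ← mul_assoc])]
        ring_nf

end Egf

theorem theorem6_general (d w₁ w₂ w₃ : ℕ) (hd : Odd d)
    (hw₁ : Odd w₁) (hw₂ : Odd w₂) (hw₃ : Odd w₃)
    (χ : ℤ → ℂ) (hχ : Function.Periodic χ (d : ℤ)) (ξ : ℂ)
    (hξ₁ : ξ ^ (d * w₂ * w₃) + 1 ≠ 0) (hξ₂ : ξ ^ (d * w₁ * w₃) + 1 ≠ 0)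
    (hξ₃ : ξ ^ (d * w₁ * w₂) + 1 ≠ 0)
    (n : ℕ) (y₁ : ℂ) :
    ((w₁ : ℂ) * w₂) ^ n * ∑ a ∈ Finset.range (w₁ * d), ∑ b ∈ Finset.range (w₂ * d),
        (-1 : ℂ) ^ (a + b) * χ a * χ b * ξ ^ (w₃ * (a * w₂ + b * w₁)) *
          E d χ (ξ ^ (w₁ * w₂))
            ((w₃ : ℂ) * y₁ + (w₃ : ℂ) / (w₁ : ℂ) * (a : ℂ) + (w₃ : ℂ) / (w₂ : ℂ) * (b : ℂ)) n =
      ((w₂ : ℂ) * w₃) ^ n * ∑ a ∈ Finset.range (w₂ * d), ∑ b ∈ Finset.range (w₃ * d),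
        (-1 : ℂ) ^ (a + b) * χ a * χ b * ξ ^ (w₁ * (a * w₃ + b * w₂)) *
          E d χ (ξ ^ (w₂ * w₃))
            ((w₁ : ℂ) * y₁ + (w₁ : ℂ) / (w₂ : ℂ) * (a : ℂ) + (w₁ : ℂ) / (w₃ : ℂ) * (b : ℂ)) n ∧
    ((w₂ : ℂ) * w₃) ^ n * ∑ a ∈ Finset.range (w₂ * d), ∑ b ∈ Finset.range (w₃ * d),
        (-1 : ℂ) ^ (a + b) * χ a * χ b * ξ ^ (w₁ * (a * w₃ + b * w₂)) *
          E d χ (ξ ^ (w₂ * w₃))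
            ((w₁ : ℂ) * y₁ + (w₁ : ℂ) / (w₂ : ℂ) * (a : ℂ) + (w₁ : ℂ) / (w₃ : ℂ) * (b : ℂ)) n =
      ((w₃ : ℂ) * w₁) ^ n * ∑ a ∈ Finset.range (w₃ * d), ∑ b ∈ Finset.range (w₁ * d),
        (-1 : ℂ) ^ (a + b) * χ a * χ b * ξ ^ (w₂ * (a * w₁ + b * w₃)) *
          E d χ (ξ ^ (w₁ * w₃))
            ((w₂ : ℂ) * y₁ + (w₂ : ℂ) / (w₃ : ℂ) * (a : ℂ) + (w₂ : ℂ) / (w₁ : ℂ) * (b : ℂ)) n := by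
  have h₃₁ : ξ ^ (d * w₃ * w₁) + 1 ≠ 0 := by rwa [mul_right_comm]
  rw [mul_comm w₁ w₃, pow_mul_sum_sum_E_eq hd hχ hw₁ hw₂ hξ₁ h₃₁ n y₁,
    pow_mul_sum_sum_E_eq hd hχ hw₂ hw₃ h₃₁ hξ₃ n y₁,
    pow_mul_sum_sum_E_eq hd hχ hw₃ hw₁ hξ₃ hξ₁ n y₁]
  constructor <;> ring_nf

/-- Theorem 6: the three double-sum expressions coincide. -/
theorem theorem6 (d w₁ w₂ w₃ : ℕ) (hd : Odd d) (hd0 : 0 < d)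
    (hw₁ : Odd w₁) (hw₂ : Odd w₂) (hw₃ : Odd w₃)
    (hw₁0 : 0 < w₁) (hw₂0 : 0 < w₂) (hw₃0 : 0 < w₃)
    (χ : ℤ → ℂ) (hχ : Function.Periodic χ (d : ℤ)) (ξ : ℂ)
    (hξ₁ : ξ ^ (d * w₂ * w₃) + 1 ≠ 0) (hξ₂ : ξ ^ (d * w₁ * w₃) + 1 ≠ 0)
    (hξ₃ : ξ ^ (d * w₁ * w₂) + 1 ≠ 0)
    (n : ℕ) (y₁ : ℂ) :
    ((w₁ : ℂ) * w₂) ^ n * ∑ a ∈ Finset.range (w₁ * d), ∑ b ∈ Finset.range (w₂ * d),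
        (-1 : ℂ) ^ (a + b) * χ a * χ b * ξ ^ (w₃ * (a * w₂ + b * w₁)) *
          E d χ (ξ ^ (w₁ * w₂))
            ((w₃ : ℂ) * y₁ + (w₃ : ℂ) / (w₁ : ℂ) * (a : ℂ) + (w₃ : ℂ) / (w₂ : ℂ) * (b : ℂ)) n =
      ((w₂ : ℂ) * w₃) ^ n * ∑ a ∈ Finset.range (w₂ * d), ∑ b ∈ Finset.range (w₃ * d),
        (-1 : ℂ) ^ (a + b) * χ a * χ b * ξ ^ (w₁ * (a * w₃ + b * w₂)) *
          E d χ (ξ ^ (w₂ * w₃))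
            ((w₁ : ℂ) * y₁ + (w₁ : ℂ) / (w₂ : ℂ) * (a : ℂ) + (w₁ : ℂ) / (w₃ : ℂ) * (b : ℂ)) n ∧
    ((w₂ : ℂ) * w₃) ^ n * ∑ a ∈ Finset.range (w₂ * d), ∑ b ∈ Finset.range (w₃ * d),
        (-1 : ℂ) ^ (a + b) * χ a * χ b * ξ ^ (w₁ * (a * w₃ + b * w₂)) *
          E d χ (ξ ^ (w₂ * w₃))
            ((w₁ : ℂ) * y₁ + (w₁ : ℂ) / (w₂ : ℂ) * (a : ℂ) + (w₁ : ℂ) / (w₃ : ℂ) * (b : ℂ)) n =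
      ((w₃ : ℂ) * w₁) ^ n * ∑ a ∈ Finset.range (w₃ * d), ∑ b ∈ Finset.range (w₁ * d),
        (-1 : ℂ) ^ (a + b) * χ a * χ b * ξ ^ (w₂ * (a * w₁ + b * w₃)) *
          E d χ (ξ ^ (w₁ * w₃))
            ((w₂ : ℂ) * y₁ + (w₂ : ℂ) / (w₃ : ℂ) * (a : ℂ) + (w₂ : ℂ) / (w₁ : ℂ) * (b : ℂ)) n :=
  theorem6_general d w₁ w₂ w₃ hd hw₁ hw₂ hw₃ χ hχ ξ hξ₁ hξ₂ hξ₃ n y₁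
end

section
/- Let d, w₁, w₂, w₃ be odd positive integers, χ : ℤ → ℂ d-periodic, ξ ∈ ℂ. Then for all n ≥ 0: ∑_{k+l+m=n} (n!/(k!l!m!)) T_k(w₁d−1;χ,ξ^{w₃}) T_l(w₂d−1;χ,ξ^{w₁}) T_m(w₃d−1;χ,ξ^{w₂}) w₃^k w₁^l w₂^m = ∑_{k+l+m=n} (n!/(k!l!m!)) T_k(w₁d−1;χ,ξ^{w₂}) T_l(w₃d−1;χ,ξ^{w₁}) T_m(w₂d−1;χ,ξ^{w₃}) w₂^k w₁^l w₃^m. -/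
/-!
`T_k(wd-1; χ, η) uᵏ / k!` is the `tᵏ`-coefficient of `∑_{a < wd} (-1)ᵃ χ(a) ηᵃ e^{aut}`, so each
side is `n!` times the `tⁿ`-coefficient of a product of three such series. Writing `a = jd + b`
with `b < d`, oddness of `d` and periodicity of `χ` factor the series with `η = ξᵘ`, `u` odd, as
`(∑_{j < w} y^{uj}) · S_u` with `y = -ξᵈ e^{dt}` and `S_u` independent of `w`. Both sides thus
share the factor `S_{w₁} S_{w₂} S_{w₃}`, and their geometric factors agree because multiplying
either by `(y^{w₁}-1)(y^{w₂}-1)(y^{w₃}-1)` gives `(y^{w₁w₂}-1)(y^{w₂w₃}-1)(y^{w₃w₁}-1)`.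
-/

open Finset PowerSeries

theorem sum_range_mul_eq_sum_sum {M : Type*} [AddCommMonoid M] (f : ℕ → M) (w d : ℕ) :
    ∑ a ∈ range (w * d), f a = ∑ j ∈ range w, ∑ b ∈ range d, f (j * d + b) := by
  induction w with
  | zero => simp
  | succ w ih => rw [Nat.succ_mul, sum_range_add, ih, sum_range_succ]

theorem geom_sum_pow_mul_cyclic_of_ne_one {R : Type*} [CommRing R] [IsDomain R] {x : R}
    {a b c : ℕ} (ha : x ^ a ≠ 1) (hb : x ^ b ≠ 1) (hc : x ^ c ≠ 1) :
    (∑ j ∈ range a, (x ^ c) ^ j) * (∑ j ∈ range b, (x ^ a) ^ j) * ∑ j ∈ range c, (x ^ b) ^ j =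
      (∑ j ∈ range a, (x ^ b) ^ j) * (∑ j ∈ range c, (x ^ a) ^ j) *
        ∑ j ∈ range b, (x ^ c) ^ j := by
  refine mul_right_cancel₀ (mul_ne_zero (mul_ne_zero (sub_ne_zero.2 ha) (sub_ne_zero.2 hb))
    (sub_ne_zero.2 hc)) ?_
  have geom (m n : ℕ) : (∑ j ∈ range m, (x ^ n) ^ j) * (x ^ n - 1) = x ^ (n * m) - 1 := by
    rw [geom_sum_mul, pow_mul]
  calc _ = (∑ j ∈ range a, (x ^ c) ^ j) * (x ^ c - 1) *
        ((∑ j ∈ range b, (x ^ a) ^ j) * (x ^ a - 1)) *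
        ((∑ j ∈ range c, (x ^ b) ^ j) * (x ^ b - 1)) := by ring
    _ = (∑ j ∈ range a, (x ^ b) ^ j) * (x ^ b - 1) *
        ((∑ j ∈ range c, (x ^ a) ^ j) * (x ^ a - 1)) *
        ((∑ j ∈ range b, (x ^ c) ^ j) * (x ^ c - 1)) := by
      simp only [geom]; ring_nf
    _ = _ := by ring

theorem geom_sum_pow_mul_cyclic {R : Type*} [CommRing R] (x : R) (a b c : ℕ) :
    (∑ j ∈ range a, (x ^ c) ^ j) * (∑ j ∈ range b, (x ^ a) ^ j) * ∑ j ∈ range c, (x ^ b) ^ j =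
      (∑ j ∈ range a, (x ^ b) ^ j) * (∑ j ∈ range c, (x ^ a) ^ j) *
        ∑ j ∈ range b, (x ^ c) ^ j := by
  rcases a.eq_zero_or_pos with rfl | ha
  · simp
  rcases b.eq_zero_or_pos with rfl | hb
  · simp
  rcases c.eq_zero_or_pos with rfl | hc
  · simp
  have hX {n : ℕ} (hn : 0 < n) : (Polynomial.X : Polynomial ℤ) ^ n ≠ 1 :=
    sub_ne_zero.1 (by simpa using Polynomial.X_pow_sub_C_ne_zero hn (1 : ℤ))
  simpa using congrArg (Polynomial.aeval x)
    (geom_sum_pow_mul_cyclic_of_ne_one (hX ha) (hX hb) (hX hc))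

theorem coeff_mul_mul {R : Type*} [CommSemiring R] (A B C : R⟦X⟧) (n : ℕ) :
    coeff n (A * (B * C)) = ∑ k ∈ range (n + 1), ∑ l ∈ range (n + 1 - k),
      coeff k A * (coeff l B * coeff (n - k - l) C) := by
  simp only [coeff_mul, Nat.sum_antidiagonal_eq_sum_range_succ_mk, mul_sum]
  refine sum_congr rfl fun k hk => ?_
  rw [Nat.sub_add_comm (mem_range_succ_iff.1 hk)]

theorem coeff_rescale_exp (c : ℂ) (k : ℕ) : coeff k (rescale c (exp ℂ)) = c ^ k / k.factorial := by
  simp [coeff_exp, div_eq_mul_inv]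

theorem rescale_exp_pow (c : ℂ) (m : ℕ) : rescale c (exp ℂ) ^ m = rescale (m * c) (exp ℂ) := by
  rw [← map_pow, exp_pow_eq_rescale_exp, rescale_rescale]

noncomputable def altPowerSumSeries (m : ℕ) (χ : ℤ → ℂ) (η u : ℂ) : ℂ⟦X⟧ :=
  ∑ a ∈ range (m + 1), ((-1 : ℂ) ^ a * χ a * η ^ a) • rescale (a * u) (exp ℂ)

theorem coeff_altPowerSumSeries (m : ℕ) (χ : ℤ → ℂ) (η u : ℂ) (k : ℕ) :
    coeff k (altPowerSumSeries m χ η u) = T m χ η k * u ^ k / k.factorial := by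
  simp only [altPowerSumSeries, T, map_sum, coeff_smul, coeff_rescale_exp, sum_mul, sum_div,
    smul_eq_mul, mul_pow]
  exact sum_congr rfl fun _ _ => by ring

theorem trinomial_sum_T_eq_factorial_mul_coeff (m₁ m₂ m₃ : ℕ) (χ : ℤ → ℂ)
    (η₁ η₂ η₃ u₁ u₂ u₃ : ℂ) (n : ℕ) :
    (∑ k ∈ range (n + 1), ∑ l ∈ range (n + 1 - k),
        (n.factorial : ℂ) / ((k.factorial : ℂ) * (l.factorial : ℂ) * ((n - k - l).factorial : ℂ)) *
          T m₁ χ η₁ k * T m₂ χ η₂ l * T m₃ χ η₃ (n - k - l) *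
          u₁ ^ k * u₂ ^ l * u₃ ^ (n - k - l)) =
      n.factorial * coeff n (altPowerSumSeries m₁ χ η₁ u₁ *
        (altPowerSumSeries m₂ χ η₂ u₂ * altPowerSumSeries m₃ χ η₃ u₃)) := by
  simp only [coeff_mul_mul, coeff_altPowerSumSeries, mul_sum]
  refine sum_congr rfl fun k _ => sum_congr rfl fun l _ => ?_
  field_simp

theorem altPowerSumSeries_mul_sub_one_eq_geom_sum_mul {d w : ℕ} (hd : Odd d) (hw : 0 < w)
    {χ : ℤ → ℂ} (hχ : Function.Periodic χ d) (η u : ℂ) :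
    altPowerSumSeries (w * d - 1) χ η u =
      (∑ j ∈ range w, ((-η ^ d) • rescale (d * u) (exp ℂ)) ^ j) *
        altPowerSumSeries (d - 1) χ η u := by
  have hd0 := hd.pos
  rw [altPowerSumSeries, altPowerSumSeries, Nat.sub_add_cancel (Nat.mul_pos hw hd0),
    Nat.sub_add_cancel hd0, sum_range_mul_eq_sum_sum, sum_mul_sum]
  refine sum_congr rfl fun j _ => sum_congr rfl fun b _ => ?_
  have hχ' : χ ((j * d + b : ℕ) : ℤ) = χ b := by
    push_cast
    rw [add_comm]
    exact hχ.nat_mul j b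
  rw [smul_pow, rescale_exp_pow, smul_mul_smul_comm, exp_mul_exp_eq_exp_add, hχ', pow_add,
    pow_add, pow_mul', hd.neg_one_pow, neg_pow, pow_mul']
  push_cast
  ring_nf

theorem neg_pow_smul_rescale_exp {u : ℕ} (hu : Odd u) (ξ : ℂ) (d : ℕ) :
    (-(ξ ^ u) ^ d) • rescale (d * u : ℂ) (exp ℂ) = ((-ξ ^ d) • rescale (d : ℂ) (exp ℂ)) ^ u := by
  rw [smul_pow, rescale_exp_pow, hu.neg_pow, ← pow_mul, ← pow_mul, mul_comm u d, mul_comm (u : ℂ)]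

theorem theorem8_general (d w₁ w₂ w₃ : ℕ) (hd : Odd d)
    (hw₁ : Odd w₁) (hw₂ : Odd w₂) (hw₃ : Odd w₃)
    (χ : ℤ → ℂ) (hχ : Function.Periodic χ (d : ℤ)) (ξ : ℂ) (n : ℕ) :
    (∑ k ∈ Finset.range (n + 1), ∑ l ∈ Finset.range (n + 1 - k),
        (n.factorial : ℂ) /
            ((k.factorial : ℂ) * (l.factorial : ℂ) * ((n - k - l).factorial : ℂ)) *
          T (w₁ * d - 1) χ (ξ ^ w₃) k * T (w₂ * d - 1) χ (ξ ^ w₁) l *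
          T (w₃ * d - 1) χ (ξ ^ w₂) (n - k - l) *
          (w₃ : ℂ) ^ k * (w₁ : ℂ) ^ l * (w₂ : ℂ) ^ (n - k - l)) =
      ∑ k ∈ Finset.range (n + 1), ∑ l ∈ Finset.range (n + 1 - k),
        (n.factorial : ℂ) /
            ((k.factorial : ℂ) * (l.factorial : ℂ) * ((n - k - l).factorial : ℂ)) *
          T (w₁ * d - 1) χ (ξ ^ w₂) k * T (w₃ * d - 1) χ (ξ ^ w₁) l *
          T (w₂ * d - 1) χ (ξ ^ w₃) (n - k - l) *
          (w₂ : ℂ) ^ k * (w₁ : ℂ) ^ l * (w₃ : ℂ) ^ (n - k - l) := by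
  rw [trinomial_sum_T_eq_factorial_mul_coeff, trinomial_sum_T_eq_factorial_mul_coeff]
  congr 2
  have factor {w u : ℕ} (hw : Odd w) (hu : Odd u) :
      altPowerSumSeries (w * d - 1) χ (ξ ^ u) u =
        (∑ j ∈ range w, (((-ξ ^ d) • rescale (d : ℂ) (exp ℂ)) ^ u) ^ j) *
          altPowerSumSeries (d - 1) χ (ξ ^ u) u := by
    rw [altPowerSumSeries_mul_sub_one_eq_geom_sum_mul hd hw.pos hχ, neg_pow_smul_rescale_exp hu]
  rw [factor hw₁ hw₃, factor hw₂ hw₁, factor hw₃ hw₂, factor hw₁ hw₂, factor hw₃ hw₁,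
    factor hw₂ hw₃]
  linear_combination (altPowerSumSeries (d - 1) χ (ξ ^ w₁) w₁ *
      altPowerSumSeries (d - 1) χ (ξ ^ w₂) w₂ * altPowerSumSeries (d - 1) χ (ξ ^ w₃) w₃) *
    geom_sum_pow_mul_cyclic ((-ξ ^ d) • rescale (d : ℂ) (exp ℂ)) w₁ w₂ w₃

/-- Theorem 8: two symmetries among alternating generalized twisted power sums. -/
theorem theorem8 (d w₁ w₂ w₃ : ℕ) (hd : Odd d) (hd0 : 0 < d)
    (hw₁ : Odd w₁) (hw₂ : Odd w₂) (hw₃ : Odd w₃)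
    (hw₁0 : 0 < w₁) (hw₂0 : 0 < w₂) (hw₃0 : 0 < w₃)
    (χ : ℤ → ℂ) (hχ : Function.Periodic χ (d : ℤ)) (ξ : ℂ) (n : ℕ) :
    (∑ k ∈ Finset.range (n + 1), ∑ l ∈ Finset.range (n + 1 - k),
        (n.factorial : ℂ) /
            ((k.factorial : ℂ) * (l.factorial : ℂ) * ((n - k - l).factorial : ℂ)) *
          T (w₁ * d - 1) χ (ξ ^ w₃) k * T (w₂ * d - 1) χ (ξ ^ w₁) l *
          T (w₃ * d - 1) χ (ξ ^ w₂) (n - k - l) *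
          (w₃ : ℂ) ^ k * (w₁ : ℂ) ^ l * (w₂ : ℂ) ^ (n - k - l)) =
      ∑ k ∈ Finset.range (n + 1), ∑ l ∈ Finset.range (n + 1 - k),
        (n.factorial : ℂ) /
            ((k.factorial : ℂ) * (l.factorial : ℂ) * ((n - k - l).factorial : ℂ)) *
          T (w₁ * d - 1) χ (ξ ^ w₂) k * T (w₃ * d - 1) χ (ξ ^ w₁) l *
          T (w₂ * d - 1) χ (ξ ^ w₃) (n - k - l) *
          (w₂ : ℂ) ^ k * (w₁ : ℂ) ^ l * (w₃ : ℂ) ^ (n - k - l) :=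
  theorem8_general d w₁ w₂ w₃ hd hw₁ hw₂ hw₃ χ hχ ξ n
end
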